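/- Derivative bounds for the Carnot–Carathéodory distance in the Reeb direction (estimates (6.11) in the proof of Proposition 6.4): there is an absolute constant C > 0 such that for every c > 0 the following holds. Let φ : (0,∞) → (0,π) satisfy χ(φ(t))·c = t for all t > 0, and define r : (0,∞) → ℝ by r(t) = √c·φ(t)/sin φ(t). Then r is twice differentiable on (0,∞), and for every t > 0 one has |r'(t)| ≤ C/r(t) and |r''(t)| ≤ C/r(t)³. -/

import Mathlib

/-!
With `F(x) = sin x - x cos x` one has `χ' = 2F / sin³`, so the inverse function theorem gives
`φ' = sin³ φ / (2cF(φ))`, and the chain rule collapses `r'` to `sin φ / (2√c)`. Hence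
`r' r = φ/2 < π/2` and `r'' r³ = φ³ cos φ / (4F(φ))`, which is bounded on `(0, π)` because
`F(x) ≥ x³/162` there.
-/

open Real Filter

/-- The profile function `χ(φ) = φ/(sin φ)² − cot φ` appearing in the explicit formula
for the Carnot–Carathéodory distance to the origin on the Heisenberg group.
(Note: with Lean's convention `x / 0 = 0`, this formula also gives `χ(0) = 0`.) -/
noncomputable def chi (φ : ℝ) : ℝ := φ / Real.sin φ ^ 2 - Real.cos φ / Real.sin φ

open Set Topology

theorem ContinuousAt.of_strictMonoOn_of_leftInverse {α β : Type*} [LinearOrder α]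
    [TopologicalSpace α] [OrderTopology α] [DenselyOrdered α] [LinearOrder β] [TopologicalSpace β]
    [OrderTopology β] {f : α → β} {g : β → α} {s : Set α} {U : Set β} {t : β}
    (hf : StrictMonoOn f s) (hfs : MapsTo f s U) (hgU : MapsTo g U s)
    (hfg : ∀ u ∈ U, f (g u) = u) (hU : U ∈ 𝓝 t) (hs : s ∈ 𝓝 (g t)) : ContinuousAt g t := by
  have hmono : MonotoneOn g U := fun u hu v hv huv => by
    rwa [← hf.le_iff_le (hgU hu) (hgU hv), hfg u hu, hfg v hv]
  have himage : g '' U = s := by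
    refine (mapsTo_iff_image_subset.1 hgU).antisymm fun x hx => ⟨f x, hfs hx, ?_⟩
    exact hf.injOn (hgU (hfs hx)) hx (hfg (f x) (hfs hx))
  exact continuousAt_of_monotoneOn_of_image_mem_nhds hmono hU (himage ▸ hs)

theorem hasDerivAt_sin_sub_mul_cos (x : ℝ) :
    HasDerivAt (fun y => sin y - y * cos y) (x * sin x) x := by
  refine ((hasDerivAt_sin x).sub ((hasDerivAt_id x).mul (hasDerivAt_cos x))).congr_deriv ?_
  simp

theorem strictMonoOn_sin_sub_mul_cos : StrictMonoOn (fun y => sin y - y * cos y) (Icc 0 π) := by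
  refine strictMonoOn_of_deriv_pos (convex_Icc 0 π) (by fun_prop) fun x hx => ?_
  rw [interior_Icc] at hx
  rw [(hasDerivAt_sin_sub_mul_cos x).deriv]
  exact mul_pos hx.1 (sin_pos_of_pos_of_lt_pi hx.1 hx.2)

theorem sin_sub_mul_cos_pos {x : ℝ} (hx₀ : 0 < x) (hxπ : x ≤ π) : 0 < sin x - x * cos x := by
  simpa using strictMonoOn_sin_sub_mul_cos ⟨le_rfl, pi_pos.le⟩ ⟨hx₀.le, hxπ⟩ hx₀

theorem pow_three_div_le_sin_sub_mul_cos {x : ℝ} (hx₀ : 0 < x) (hxπ : x ≤ π) :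
    x ^ 3 / 162 ≤ sin x - x * cos x := by
  rcases le_or_gt x 1 with hx₁ | hx₁
  · -- Taylor: `F(x) ≥ x³/3 - 5x⁵/96`.
    have hsin := sin_gt_sub_cube hx₀
    have hcos : cos x ≤ 1 - x ^ 2 / 2 + x ^ 4 * (5 / 96) := by
      have := (abs_le.1 (cos_bound (x := x) (by rwa [abs_of_pos hx₀]))).2
      rw [abs_of_pos hx₀] at this
      linarith
    have hx₅ : x ^ 5 ≤ x ^ 3 := pow_le_pow_of_le_one hx₀.le hx₁ (by norm_num)
    nlinarith [mul_le_mul_of_nonneg_left hcos hx₀.le, pow_pos hx₀ 3]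
  · -- Monotonicity: `F(x) ≥ F(1) > 0.19 > π³/162`.
    have hF₁ : sin 1 - 1 * cos 1 ≤ sin x - x * cos x :=
      strictMonoOn_sin_sub_mul_cos.monotoneOn ⟨zero_le_one, by linarith [pi_gt_three]⟩
        ⟨hx₀.le, hxπ⟩ hx₁.le
    have hsin₁ : (0.75 : ℝ) < sin 1 := by
      have := sin_gt_sub_cube one_pos
      norm_num at this ⊢
      linarith
    have hcos₁ : cos 1 ≤ 1 - 1 / 2 + 5 / 96 := by
      have := abs_le.1 (cos_bound (x := (1 : ℝ)) (by norm_num))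
      norm_num at this ⊢
      linarith [this.2]
    have hx₃ : x ^ 3 < 3.15 ^ 3 := pow_lt_pow_left₀ (hxπ.trans_lt pi_lt_d2) hx₀.le (by norm_num)
    nlinarith

theorem hasDerivAt_chi {x : ℝ} (hx : sin x ≠ 0) :
    HasDerivAt chi (2 * (sin x - x * cos x) / sin x ^ 3) x := by
  have h₁ := (hasDerivAt_id' x).div ((hasDerivAt_sin x).pow 2) (pow_ne_zero 2 hx)
  have h₂ := (hasDerivAt_cos x).div (hasDerivAt_sin x) hx
  refine (h₁.sub h₂).congr_deriv ?_
  simp only [Pi.pow_apply]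
  field_simp
  linear_combination sin x ^ 2 * sin_sq_add_cos_sq x

theorem chi_pos {x : ℝ} (hx₀ : 0 < x) (hx : sin x ≠ 0) : 0 < chi x := by
  have hchi : chi x = (x - sin (2 * x) / 2) / sin x ^ 2 := by
    rw [chi, sin_two_mul]
    field_simp
  rw [hchi]
  have := sin_lt (mul_pos two_pos hx₀)
  exact div_pos (by linarith) (by positivity)

theorem strictMonoOn_chi : StrictMonoOn chi (Ioo 0 π) := by
  have hderiv : ∀ x ∈ Ioo 0 π, HasDerivAt chi (2 * (sin x - x * cos x) / sin x ^ 3) x :=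
    fun x hx => hasDerivAt_chi (sin_pos_of_pos_of_lt_pi hx.1 hx.2).ne'
  refine strictMonoOn_of_deriv_pos (convex_Ioo 0 π)
    (fun x hx => (hderiv x hx).continuousAt.continuousWithinAt) fun x hx => ?_
  rw [interior_Ioo] at hx
  rw [(hderiv x hx).deriv]
  have := sin_pos_of_pos_of_lt_pi hx.1 hx.2
  have := sin_sub_mul_cos_pos hx.1 hx.2.le
  positivity

section InverseChi

variable {c : ℝ} {φ : ℝ → ℝ} {t : ℝ}

theorem continuousAt_of_chi_mul_eq (hc : 0 < c)
    (hφ : ∀ t, 0 < t → φ t ∈ Ioo 0 π ∧ chi (φ t) * c = t) (ht : 0 < t) : ContinuousAt φ t :=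
  .of_strictMonoOn_of_leftInverse (f := fun x => chi x * c)
    (fun _ hx _ hy hxy => mul_lt_mul_of_pos_right (strictMonoOn_chi hx hy hxy) hc)
    (fun _ hx => mul_pos (chi_pos hx.1 (sin_pos_of_pos_of_lt_pi hx.1 hx.2).ne') hc)
    (fun u hu => (hφ u hu).1) (fun u hu => (hφ u hu).2) (Ioi_mem_nhds ht)
    (Ioo_mem_nhds (hφ t ht).1.1 (hφ t ht).1.2)

theorem hasDerivAt_of_chi_mul_eq (hc : 0 < c)
    (hφ : ∀ t, 0 < t → φ t ∈ Ioo 0 π ∧ chi (φ t) * c = t) (ht : 0 < t) :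
    HasDerivAt φ ((2 * (sin (φ t) - φ t * cos (φ t)) / sin (φ t) ^ 3 * c)⁻¹) t := by
  obtain ⟨hφ₀, hφπ⟩ := (hφ t ht).1
  have hsin := sin_pos_of_pos_of_lt_pi hφ₀ hφπ
  have := sin_sub_mul_cos_pos hφ₀ hφπ.le
  refine .of_local_left_inverse (continuousAt_of_chi_mul_eq hc hφ ht)
    ((hasDerivAt_chi hsin.ne').mul_const c) (by positivity) ?_
  filter_upwards [Ioi_mem_nhds ht] with u hu using (hφ u hu).2

theorem hasDerivAt_sqrt_mul_div_sin_of_chi_mul_eq (hc : 0 < c)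
    (hφ : ∀ t, 0 < t → φ t ∈ Ioo 0 π ∧ chi (φ t) * c = t) (ht : 0 < t) :
    HasDerivAt (fun s => √c * φ s / sin (φ s)) (sin (φ t) / (2 * √c)) t := by
  obtain ⟨hφ₀, hφπ⟩ := (hφ t ht).1
  have hsin := sin_pos_of_pos_of_lt_pi hφ₀ hφπ
  have hF := (sin_sub_mul_cos_pos hφ₀ hφπ.le).ne'
  have hradius := ((hasDerivAt_id' (φ t)).const_mul √c).div (hasDerivAt_sin (φ t)) hsin.ne'
  refine (hradius.comp t (hasDerivAt_of_chi_mul_eq hc hφ ht)).congr_deriv ?_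
  field_simp
  linear_combination sq_sqrt hc.le

theorem hasDerivAt_deriv_sqrt_mul_div_sin_of_chi_mul_eq (hc : 0 < c)
    (hφ : ∀ t, 0 < t → φ t ∈ Ioo 0 π ∧ chi (φ t) * c = t) (ht : 0 < t) :
    HasDerivAt (deriv fun s => √c * φ s / sin (φ s))
      (cos (φ t) * (2 * (sin (φ t) - φ t * cos (φ t)) / sin (φ t) ^ 3 * c)⁻¹ / (2 * √c)) t := by
  have hderiv : (deriv fun s => √c * φ s / sin (φ s)) =ᶠ[𝓝 t] fun s => sin (φ s) / (2 * √c) := by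
    filter_upwards [Ioi_mem_nhds ht] with u hu
    exact (hasDerivAt_sqrt_mul_div_sin_of_chi_mul_eq hc hφ hu).deriv
  exact (((hasDerivAt_sin (φ t)).comp t (hasDerivAt_of_chi_mul_eq hc hφ ht)).div_const
    (2 * √c)).congr_of_eventuallyEq hderiv

end InverseChi

section Bounds

variable {c a : ℝ}

theorem abs_sin_div_two_sqrt_le (hc : 0 < c) (ha : a ∈ Ioo 0 π) :
    |sin a / (2 * √c)| ≤ (π / 2) / (√c * a / sin a) := by
  obtain ⟨ha₀, haπ⟩ := ha
  have := sin_pos_of_pos_of_lt_pi ha₀ haπ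
  have := sqrt_pos.2 hc
  have hprod : sin a / (2 * √c) * (√c * a / sin a) = a / 2 := by field_simp
  rw [abs_of_pos (by positivity), le_div_iff₀ (by positivity), hprod]
  linarith

theorem abs_cos_mul_div_two_sqrt_le (hc : 0 < c) (ha : a ∈ Ioo 0 π) :
    |cos a * (2 * (sin a - a * cos a) / sin a ^ 3 * c)⁻¹ / (2 * √c)| ≤
      (81 / 2) / (√c * a / sin a) ^ 3 := by
  obtain ⟨ha₀, haπ⟩ := ha
  have := sin_pos_of_pos_of_lt_pi ha₀ haπ
  have hF := sin_sub_mul_cos_pos ha₀ haπ.le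
  have := sqrt_pos.2 hc
  have hprod : cos a * (2 * (sin a - a * cos a) / sin a ^ 3 * c)⁻¹ / (2 * √c) *
      (√c * a / sin a) ^ 3 = cos a * (a ^ 3 / (4 * (sin a - a * cos a))) := by
    generalize sin a - a * cos a = F at hF
    field_simp
    linear_combination 4 * cos a * sq_sqrt hc.le
  have hquot : a ^ 3 / (4 * (sin a - a * cos a)) ≤ 81 / 2 := by
    rw [div_le_iff₀ (by positivity)]
    linarith [pow_three_div_le_sin_sub_mul_cos ha₀ haπ.le]
  rw [le_div_iff₀ (by positivity), ← abs_of_pos (a := (√c * a / sin a) ^ 3) (by positivity),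
    ← abs_mul, hprod, abs_mul, abs_of_pos (a := a ^ 3 / _) (by positivity)]
  simpa using mul_le_mul (abs_cos_le_one a) hquot (by positivity) zero_le_one

end Bounds

/-- estimates (6.11) in the proof of Proposition 6.4: there is an
absolute constant `C > 0` such that, whenever `χ(φ(t))·c = t` for all `t > 0` with
`φ(t) ∈ (0, π)` and `r(t) = √c·φ(t)/sin φ(t)`, the function `r` is twice differentiable
on `(0, ∞)` with `|r'(t)| ≤ C/r(t)` and `|r''(t)| ≤ C/r(t)³`. -/
theorem reeb_deriv_bounds_cc_dist :
    ∃ C : ℝ, 0 < C ∧ ∀ c : ℝ, 0 < c → ∀ φ r : ℝ → ℝ,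
      (∀ t : ℝ, 0 < t → φ t ∈ Set.Ioo 0 π ∧ chi (φ t) * c = t) →
      (∀ t : ℝ, r t = Real.sqrt c * φ t / Real.sin (φ t)) →
      ∀ t : ℝ, 0 < t →
        DifferentiableAt ℝ r t ∧ DifferentiableAt ℝ (deriv r) t ∧
        |deriv r t| ≤ C / r t ∧ |deriv (deriv r) t| ≤ C / r t ^ 3 := by
  refine ⟨81 / 2, by norm_num, fun c hc φ r hφ hr t ht => ?_⟩
  obtain rfl : r = fun s => √c * φ s / sin (φ s) := funext hr
  have hr' := hasDerivAt_sqrt_mul_div_sin_of_chi_mul_eq hc hφ ht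
  have hr'' := hasDerivAt_deriv_sqrt_mul_div_sin_of_chi_mul_eq hc hφ ht
  obtain ⟨hφ₀, hφπ⟩ := (hφ t ht).1
  have := sin_pos_of_pos_of_lt_pi hφ₀ hφπ
  refine ⟨hr'.differentiableAt, hr''.differentiableAt, ?_, ?_⟩
  · rw [hr'.deriv]
    refine (abs_sin_div_two_sqrt_le hc (hφ t ht).1).trans ?_
    gcongr
    linarith [pi_lt_d2]
  · rw [hr''.deriv]
    exact abs_cos_mul_div_two_sqrt_le hc (hφ t ht).1
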